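/- Let X and Z be independent exponential random variables with means m_x > 0 and m_z > 0, and define E₁(a) = ∫_a^∞ (exp(−t)/t) dt for a > 0. Then E[ ln( 1 + X·Z/(Z + 1) ) ] ≥ ln( 1 + m_x·m_z·exp( −2γ_E − exp(1/m_z)·E₁(1/m_z) ) ), where γ_E is the Euler–Mascheroni constant. -/

import Mathlib

/-!
Write `XZ/(Z+1) = exp T` with `T = log X + log Z - log (1 + Z)`. The softplus function
`t ↦ log (1 + exp t)` is convex, so Jensen's inequality gives
`E[log (1 + exp T)] ≥ log (1 + exp E[T])`, and `E[T]` follows by linearity from two moments of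
an exponential law of rate `r`: `E[log X] = -log r - γ` comes from `Γ'(1) = -γ`, `Γ'` being the
Mellin transform of `log t * exp (-t)`, and `E[log (1 + X)] = e^r E₁(r)` from an integration by
parts followed by the shift `t ↦ t + r`.
-/

open MeasureTheory ProbabilityTheory Real Set Filter Topology

section Softplus

lemma continuous_log_one_add_exp : Continuous fun t : ℝ => log (1 + exp t) :=
  (continuous_const.add continuous_exp).log fun t => (add_pos one_pos (exp_pos t)).ne'

lemma convexOn_log_one_add_exp : ConvexOn ℝ univ fun t : ℝ => log (1 + exp t) := by
  have hderiv (t : ℝ) : HasDerivAt (fun t => log (1 + exp t)) (exp t / (1 + exp t)) t :=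
    ((hasDerivAt_exp t).const_add 1).log (by positivity)
  refine MonotoneOn.convexOn_of_deriv convex_univ continuous_log_one_add_exp.continuousOn
    (fun t _ => (hderiv t).differentiableAt.differentiableWithinAt) ?_
  intro s _ t _ hst
  simp only [(hderiv _).deriv]
  rw [div_le_div_iff₀ (by positivity) (by positivity)]
  nlinarith [exp_le_exp.2 hst]

lemma log_one_add_exp_le (t : ℝ) : log (1 + exp t) ≤ log 2 + |t| := by
  calc log (1 + exp t) ≤ log (2 * exp |t|) :=
        log_le_log (by positivity)
          (by linarith [one_le_exp (abs_nonneg t), exp_le_exp.2 (le_abs_self t)])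
    _ = log 2 + |t| := by rw [log_mul two_ne_zero (exp_pos _).ne', log_exp]

variable {Ω : Type*} [MeasurableSpace Ω] {μ : Measure Ω} {f : Ω → ℝ}

lemma MeasureTheory.Integrable.log_one_add_exp [IsFiniteMeasure μ] (hf : Integrable f μ) :
    Integrable (fun ω => log (1 + exp (f ω))) μ := by
  refine ((integrable_const (log 2)).add hf.abs).mono'
    (continuous_log_one_add_exp.comp_aestronglyMeasurable hf.1) (ae_of_all _ fun ω => ?_)
  rw [norm_of_nonneg (log_nonneg (by linarith [exp_pos (f ω)]))]
  exact log_one_add_exp_le (f ω)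

lemma log_one_add_exp_integral_le [IsProbabilityMeasure μ] (hf : Integrable f μ) :
    log (1 + exp (∫ ω, f ω ∂μ)) ≤ ∫ ω, log (1 + exp (f ω)) ∂μ :=
  convexOn_log_one_add_exp.map_integral_le continuous_log_one_add_exp.continuousOn isClosed_univ
    (ae_of_all _ fun _ => mem_univ _) hf hf.log_one_add_exp

end Softplus

lemma integral_log_mul_exp_neg :
    ∫ t in Ioi (0 : ℝ), log t * exp (-t) = -eulerMascheroniConstant := by
  have hGammaIntegral := Complex.hasDerivAt_GammaIntegral (s := 1) (by norm_num)
  have hGamma := hGammaIntegral.congr_of_eventuallyEq <| by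
    filter_upwards [(isOpen_lt continuous_const Complex.continuous_re).mem_nhds
      (show (0 : ℝ) < (1 : ℂ).re by norm_num)] with s hs
    exact Complex.Gamma_eq_integral hs
  have hGammaReal := hGamma.comp_ofReal (z := 1)
  simp only [sub_self, Complex.cpow_zero, one_mul, Complex.Gamma_ofReal, ← Complex.ofReal_mul,
    integral_complex_ofReal] at hGammaReal
  exact_mod_cast hGammaReal.unique hasDerivAt_Gamma_one.ofReal_comp

-- A function that is not integrable has integral `0`.
lemma integrableOn_log_mul_exp_neg : IntegrableOn (fun t => log t * exp (-t)) (Ioi 0) :=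
  Integrable.of_integral_ne_zero <| by
    rw [integral_log_mul_exp_neg]
    linarith [one_half_lt_eulerMascheroniConstant]

lemma integrableOn_mul_exp_neg : IntegrableOn (fun t => t * exp (-t)) (Ioi 0) := by
  have := GammaIntegral_convergent (s := 2) (by norm_num)
  norm_num [mul_comm] at this
  exact this

lemma setIntegral_Ioi_comp_add_right {E : Type*} [NormedAddCommGroup E] [NormedSpace ℝ E]
    (g : ℝ → E) (a d : ℝ) : ∫ x in Ioi a, g (x + d) = ∫ x in Ioi (a + d), g x := by
  have := (measurePreserving_add_right volume d).setIntegral_preimage_emb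
    (measurableEmbedding_addRight d) g (Ioi (a + d))
  rwa [preimage_add_const_Ioi, add_sub_cancel_right] at this

section Exponential

variable {r : ℝ}

lemma expMeasure_eq_withDensity_Ioi :
    expMeasure r = (volume.restrict (Ioi 0)).withDensity
      (fun x => ENNReal.ofReal (r * exp (-(r * x)))) := by
  have hpdf : (fun x => ENNReal.ofReal (exponentialPDFReal r x))
      = (Ici 0).indicator (fun x => ENNReal.ofReal (r * exp (-(r * x)))) := by
    ext x
    simp only [exponentialPDFReal, gammaPDFReal, indicator, mem_Ici]
    split_ifs <;> simp
  change volume.withDensity (fun x => ENNReal.ofReal (exponentialPDFReal r x)) = _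
  rw [hpdf, withDensity_indicator measurableSet_Ici, Measure.restrict_congr_set Ioi_ae_eq_Ici]

lemma ae_pos_expMeasure : ∀ᵐ x ∂expMeasure r, 0 < x := by
  rw [expMeasure_eq_withDensity_Ioi]
  exact (withDensity_absolutelyContinuous _ _).ae_le (ae_restrict_mem measurableSet_Ioi)

lemma toReal_ofReal_exponentialDensity (hr : 0 < r) (x : ℝ) :
    (ENNReal.ofReal (r * exp (-(r * x)))).toReal = r * exp (-(r * x)) :=
  ENNReal.toReal_ofReal (by positivity)

lemma integral_expMeasure (hr : 0 < r) (f : ℝ → ℝ) :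
    ∫ x, f x ∂expMeasure r = ∫ t in Ioi 0, f (t / r) * exp (-t) := by
  rw [expMeasure_eq_withDensity_Ioi, integral_withDensity_eq_integral_toReal_smul (by fun_prop)
    (by simp)]
  simp_rw [toReal_ofReal_exponentialDensity hr]
  have := integral_comp_mul_left_Ioi (fun t => f (t / r) * exp (-t)) 0 hr
  simp only [mul_zero, mul_div_cancel_left₀ _ hr.ne', smul_eq_mul] at this
  simp_rw [smul_eq_mul, mul_assoc, mul_comm (exp _) (f _)]
  rw [integral_const_mul, this, mul_inv_cancel_left₀ hr.ne']

lemma integrable_expMeasure_iff (hr : 0 < r) {f : ℝ → ℝ} :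
    Integrable f (expMeasure r) ↔ IntegrableOn (fun t => f (t / r) * exp (-t)) (Ioi 0) := by
  rw [expMeasure_eq_withDensity_Ioi, integrable_withDensity_iff_integrable_smul' (by fun_prop)
    (by simp)]
  have := integrableOn_Ioi_comp_mul_left_iff (fun t => f (t / r) * exp (-t)) 0 hr
  simp only [mul_zero, mul_div_cancel_left₀ _ hr.ne'] at this
  simp_rw [← this, toReal_ofReal_exponentialDensity hr, smul_eq_mul, mul_assoc,
    mul_comm (exp _) (f _)]
  exact integrable_const_mul_iff (isUnit_iff_ne_zero.mpr hr.ne') _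

lemma integrable_log_expMeasure (hr : 0 < r) : Integrable log (expMeasure r) := by
  rw [integrable_expMeasure_iff hr]
  refine (integrableOn_log_mul_exp_neg.sub ((integrableOn_exp_neg_Ioi 0).const_mul (log r)))
    |>.congr_fun (fun t ht => ?_) measurableSet_Ioi
  rw [Pi.sub_apply, log_div (ne_of_gt ht) hr.ne']
  ring

lemma integral_log_expMeasure (hr : 0 < r) :
    ∫ x, log x ∂expMeasure r = -log r - eulerMascheroniConstant := by
  rw [integral_expMeasure hr, setIntegral_congr_fun measurableSet_Ioi
    (g := fun t => log t * exp (-t) - log r * exp (-t)) (fun t ht => by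
      rw [log_div (ne_of_gt ht) hr.ne']; ring),
    integral_sub integrableOn_log_mul_exp_neg ((integrableOn_exp_neg_Ioi 0).const_mul _),
    integral_const_mul, integral_log_mul_exp_neg, integral_exp_neg_Ioi_zero]
  ring

lemma integrable_log_one_add_expMeasure (hr : 0 < r) :
    Integrable (fun x => log (1 + x)) (expMeasure r) := by
  rw [integrable_expMeasure_iff hr]
  refine (integrableOn_mul_exp_neg.const_mul r⁻¹).mono' (by fun_prop) ?_
  filter_upwards [ae_restrict_mem measurableSet_Ioi] with t (ht : 0 < t)
  have hlog : 0 ≤ log (1 + t / r) := log_nonneg (by simp; positivity)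
  rw [norm_mul, norm_of_nonneg hlog, norm_of_nonneg (exp_pos _).le, ← mul_assoc,
    ← div_eq_inv_mul]
  gcongr
  linarith [log_le_sub_one_of_pos (show 0 < 1 + t / r by positivity)]

lemma integral_log_one_add_expMeasure (hr : 0 < r) :
    ∫ x, log (1 + x) ∂expMeasure r = exp r * ∫ t in Ioi r, exp (-t) / t := by
  set u : ℝ → ℝ := fun t => log (1 + t / r)
  set v : ℝ → ℝ := fun t => -exp (-t)
  have hu : ∀ t ∈ Ioi (0 : ℝ), HasDerivAt u (r + t)⁻¹ t := fun t (ht : 0 < t) => by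
    refine (((hasDerivAt_id t).div_const r).const_add 1).log (by positivity) |>.congr_deriv ?_
    rw [id]
    field_simp
  have hv : ∀ t ∈ Ioi (0 : ℝ), HasDerivAt v (exp (-t)) t := fun t _ => by
    refine (hasDerivAt_neg t).exp.fun_neg.congr_deriv ?_
    simp
  have huv' : IntegrableOn (u * fun t => exp (-t)) (Ioi 0) :=
    (integrable_expMeasure_iff hr).1 (integrable_log_one_add_expMeasure hr)
  have hu'v : IntegrableOn ((fun t => (r + t)⁻¹) * v) (Ioi 0) := by
    refine ((integrableOn_exp_neg_Ioi 0).const_mul r⁻¹).mono' (by fun_prop) ?_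
    filter_upwards [ae_restrict_mem measurableSet_Ioi] with t (ht : 0 < t)
    simp only [Pi.mul_apply, v, norm_mul, norm_neg, norm_inv, norm_of_nonneg (exp_pos _).le,
      norm_of_nonneg (by positivity : 0 ≤ r + t)]
    gcongr
    linarith
  have h_zero : Tendsto (u * v) (𝓝[>] 0) (𝓝 0) := by
    have : ContinuousAt (u * v) 0 :=
      ((continuousAt_const.add (continuousAt_id.div_const r)).log (by simp)).mul (by fun_prop)
    simpa [u, v] using this.tendsto.mono_left nhdsWithin_le_nhds
  have h_infty : Tendsto (u * v) atTop (𝓝 0) :=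
    tendsto_zero_of_hasDerivAt_of_integrableOn_Ioi (fun t ht => (hu t ht).mul (hv t ht))
      (hu'v.add huv') (huv'.neg.congr_fun (fun t _ => by simp [v]) measurableSet_Ioi)
  have hshift : ∫ t in Ioi 0, (r + t)⁻¹ * exp (-t) = exp r * ∫ t in Ioi r, exp (-t) / t := by
    have := setIntegral_Ioi_comp_add_right (fun t => exp r * (exp (-t) / t)) 0 r
    rw [zero_add] at this
    rw [← integral_const_mul, ← this]
    refine setIntegral_congr_fun measurableSet_Ioi fun t ht => ?_
    rw [neg_add, exp_add, add_comm t r]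
    field_simp
    rw [← exp_add, add_neg_cancel, exp_zero]
  rw [integral_expMeasure hr, ← hshift]
  simpa [u, v, integral_neg] using
    integral_Ioi_mul_deriv_eq_deriv_mul hu hv huv' hu'v h_zero h_infty

end Exponential

section Jensen

variable {Ω : Type*} [MeasurableSpace Ω] {μ : Measure Ω} [IsProbabilityMeasure μ]
  {X Z : Ω → ℝ}

lemma log_one_add_exp_integral_le_integral_log_one_add_mul_div
    (hXpos : ∀ᵐ ω ∂μ, 0 < X ω) (hZpos : ∀ᵐ ω ∂μ, 0 < Z ω)
    (hlogX : Integrable (fun ω => log (X ω)) μ) (hlogZ : Integrable (fun ω => log (Z ω)) μ)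
    (hlog1Z : Integrable (fun ω => log (1 + Z ω)) μ) :
    log (1 + exp (∫ ω, log (X ω) ∂μ + ∫ ω, log (Z ω) ∂μ - ∫ ω, log (1 + Z ω) ∂μ)) ≤
      ∫ ω, log (1 + X ω * Z ω / (Z ω + 1)) ∂μ := by
  have hexp : ∀ᵐ ω ∂μ,
      exp (log (X ω) + log (Z ω) - log (1 + Z ω)) = X ω * Z ω / (Z ω + 1) := by
    filter_upwards [hXpos, hZpos] with ω hx hz
    rw [exp_sub, exp_add, exp_log hx, exp_log hz, exp_log (by positivity), add_comm 1 (Z ω)]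
  rw [← integral_add hlogX hlogZ, ← integral_sub (hlogX.fun_add hlogZ) hlog1Z]
  calc _ ≤ ∫ ω, log (1 + exp (log (X ω) + log (Z ω) - log (1 + Z ω))) ∂μ :=
        log_one_add_exp_integral_le ((hlogX.add hlogZ).sub hlog1Z)
    _ = _ := integral_congr_ae (hexp.mono fun ω h => congrArg (fun y => log (1 + y)) h)

end Jensen

theorem T1_lower_bound_general
    {Ω : Type*} [MeasurableSpace Ω] (μ : Measure Ω) [IsProbabilityMeasure μ]
    (X Z : Ω → ℝ) (hXm : Measurable X) (hZm : Measurable Z)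
    (mx mz : ℝ) (hmx : 0 < mx) (hmz : 0 < mz)
    (hX : Measure.map X μ = expMeasure mx⁻¹)
    (hZ : Measure.map Z μ = expMeasure mz⁻¹)
    (E₁ : ℝ → ℝ) (hE₁ : ∀ a, 0 < a → E₁ a = ∫ t in Set.Ioi a, Real.exp (-t) / t) :
    (∫ ω, Real.log (1 + X ω * Z ω / (Z ω + 1)) ∂μ) ≥
      Real.log (1 + mx * mz * Real.exp (-2 * Real.eulerMascheroniConstant
        - Real.exp (1 / mz) * E₁ (1 / mz))) := by
  have hrx : 0 < mx⁻¹ := inv_pos.2 hmx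
  have hrz : 0 < mz⁻¹ := inv_pos.2 hmz
  have hEX : ∫ ω, log (X ω) ∂μ = log mx - eulerMascheroniConstant := by
    rw [← integral_map hXm.aemeasurable measurable_log.aestronglyMeasurable, hX,
      integral_log_expMeasure hrx, log_inv, neg_neg]
  have hEZ : ∫ ω, log (Z ω) ∂μ = log mz - eulerMascheroniConstant := by
    rw [← integral_map hZm.aemeasurable measurable_log.aestronglyMeasurable, hZ,
      integral_log_expMeasure hrz, log_inv, neg_neg]
  have hE1Z : ∫ ω, log (1 + Z ω) ∂μ = exp (1 / mz) * E₁ (1 / mz) := by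
    have hlog1p : Measurable fun z : ℝ => log (1 + z) := by fun_prop
    rw [← integral_map hZm.aemeasurable hlog1p.aestronglyMeasurable, hZ,
      integral_log_one_add_expMeasure hrz, one_div, hE₁ _ hrz]
  have hmean : mx * mz * exp (-2 * eulerMascheroniConstant - exp (1 / mz) * E₁ (1 / mz))
      = exp (∫ ω, log (X ω) ∂μ + ∫ ω, log (Z ω) ∂μ - ∫ ω, log (1 + Z ω) ∂μ) := by
    rw [hEX, hEZ, hE1Z,
      show ∀ a b c d : ℝ, a - c + (b - c) - d = a + b + (-2 * c - d) by intros; ring,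
      exp_add, exp_add, exp_log hmx, exp_log hmz]
  rw [ge_iff_le, hmean]
  exact log_one_add_exp_integral_le_integral_log_one_add_mul_div
    (ae_of_ae_map hXm.aemeasurable (hX ▸ ae_pos_expMeasure))
    (ae_of_ae_map hZm.aemeasurable (hZ ▸ ae_pos_expMeasure))
    ((hX ▸ integrable_log_expMeasure hrx).comp_measurable hXm)
    ((hZ ▸ integrable_log_expMeasure hrz).comp_measurable hZm)
    ((hZ ▸ integrable_log_one_add_expMeasure hrz).comp_measurable hZm)

/-- **Lower bound on `T₁ = E[ln(1 + XZ/(Z+1))]` (eq. (24)).** For independent exponentials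
`X, Z` with means `m_x, m_z > 0`,
`T₁ ≥ ln(1 + m_x m_z exp(-2γ_E - e^{1/m_z} E₁(1/m_z)))`. -/
theorem T1_lower_bound
    {Ω : Type*} [MeasurableSpace Ω] (μ : Measure Ω) [IsProbabilityMeasure μ]
    (X Z : Ω → ℝ) (hXm : Measurable X) (hZm : Measurable Z)
    (hindep : IndepFun X Z μ)
    (mx mz : ℝ) (hmx : 0 < mx) (hmz : 0 < mz)
    (hX : Measure.map X μ = expMeasure mx⁻¹)
    (hZ : Measure.map Z μ = expMeasure mz⁻¹)
    (E₁ : ℝ → ℝ) (hE₁ : ∀ a, 0 < a → E₁ a = ∫ t in Set.Ioi a, Real.exp (-t) / t) :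
    (∫ ω, Real.log (1 + X ω * Z ω / (Z ω + 1)) ∂μ) ≥
      Real.log (1 + mx * mz * Real.exp (-2 * Real.eulerMascheroniConstant
        - Real.exp (1 / mz) * E₁ (1 / mz))) :=
  T1_lower_bound_general μ X Z hXm hZm mx mz hmx hmz hX hZ E₁ hE₁
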